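/- arXiv:2510.25289 — 3 statements merged into one kernel-verified Lean document; each statement's English description precedes it below -/
import Mathlib

section
/- Let π be a uniformly random bijection from a set V₁ of size n to a set V₂ of size n, and let H₁, H₂ be simple graphs with vertex sets contained in V₁ and V₂ respectively. Then the probability that π maps H₁ exactly onto H₂ (i.e. π(E(H₁)) = E(H₂) as edge sets) is at most min((v(H₁)/n)^{v(H₁)}, (v(H₂)/n)^{v(H₂)}). -/
/-!
A bijection `π` with `π(H₁) = H₂` carries the support of `H₁` onto the support of `H₂`, so both
supports have the same size `k`, and `π` is determined by a bijection between the supports and one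
between their complements: there are at most `k! (n - k)!` such `π`. The probability is therefore
at most `k! (n - k)! / n! = 1 / C(n, k) ≤ (k / n) ^ k`.
-/

open Nat Finset

theorem Nat.pow_le_choose_mul_pow {n k : ℕ} (hkn : k ≤ n) : n ^ k ≤ n.choose k * k ^ k := by
  -- compare `n ^ k * k !` with `k ^ k * n.descFactorial k` factorwise: `n (k - i) ≤ k (n - i)`
  have hprod : n ^ k * k ! ≤ k ^ k * n.descFactorial k := by
    calc n ^ k * k ! = ∏ i ∈ range k, n * (k - i) := by
          rw [prod_mul_distrib, prod_const, card_range, ← descFactorial_eq_prod_range,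
            descFactorial_self]
      _ ≤ ∏ i ∈ range k, k * (n - i) := prod_le_prod' fun i hi => by
          obtain ⟨a, rfl⟩ := Nat.exists_eq_add_of_lt (mem_range.mp hi)
          obtain ⟨b, rfl⟩ := Nat.exists_eq_add_of_le hkn
          rw [show i + a + 1 - i = a + 1 by omega, show i + a + 1 + b - i = a + 1 + b by omega]
          nlinarith
      _ = k ^ k * n.descFactorial k := by
          rw [prod_mul_distrib, prod_const, card_range, ← descFactorial_eq_prod_range]
  rw [descFactorial_eq_factorial_mul_choose] at hprod
  refine Nat.le_of_mul_le_mul_right (c := k !) ?_ (factorial_pos k)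
  linarith [hprod]

theorem Nat.factorial_mul_factorial_div_factorial_le {n k : ℕ} (hkn : k ≤ n) :
    ((k ! * (n - k)! : ℕ) : ℝ) / n ! ≤ ((k : ℝ) / n) ^ k := by
  rcases Nat.eq_zero_or_pos n with rfl | hn
  · obtain rfl : k = 0 := Nat.le_zero.mp hkn
    simp
  have hpow : (n : ℝ) ^ k ≤ n.choose k * k ^ k := by exact_mod_cast Nat.pow_le_choose_mul_pow hkn
  rw [div_pow, div_le_div_iff₀ (by positivity) (by positivity),
    ← Nat.choose_mul_factorial_mul_factorial hkn]
  push_cast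
  calc (k ! * (n - k)! : ℝ) * n ^ k ≤ k ! * (n - k)! * (n.choose k * k ^ k) := by gcongr
    _ = k ^ k * (n.choose k * k ! * (n - k)!) := by ring

theorem Nat.card_equiv_le_factorial (α β : Type*) [Finite α] :
    Nat.card (α ≃ β) ≤ (Nat.card α)! := by
  rcases isEmpty_or_nonempty (α ≃ β) with _ | ⟨⟨e⟩⟩
  · simp
  · have : Finite β := .of_equiv α e
    have := Fintype.ofFinite α
    have := Fintype.ofFinite β
    classical
    rw [Nat.card_eq_fintype_card, Nat.card_eq_fintype_card, Fintype.card_equiv e]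

theorem Nat.card_equiv_image_eq_le {α β : Type*} [Finite α] (s : Set α) (t : Set β) :
    Nat.card {π : α ≃ β // π '' s = t} ≤ s.ncard ! * (Nat.card α - s.ncard)! := by
  have hmem {π : α ≃ β} (h : π '' s = t) (a : α) : a ∈ s ↔ π a ∈ t := by
    rw [← h, π.injective.mem_set_image]
  let restrict (π : {π : α ≃ β // π '' s = t}) : (s ≃ t) × (↥sᶜ ≃ ↥tᶜ) :=
    (π.1.subtypeEquiv (hmem π.2), π.1.subtypeEquiv fun a => (hmem π.2 a).not)
  have hinj : Function.Injective restrict := by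
    intro π σ h
    refine Subtype.ext (Equiv.ext fun a => ?_)
    by_cases ha : a ∈ s
    · exact congrArg (fun p => (p.1 ⟨a, ha⟩ : β)) h
    · exact congrArg (fun p => (p.2 ⟨a, ha⟩ : β)) h
  calc Nat.card {π : α ≃ β // π '' s = t}
      ≤ Nat.card ((s ≃ t) × (↥sᶜ ≃ ↥tᶜ)) := Nat.card_le_card_of_injective restrict hinj
    _ ≤ (Nat.card s)! * (Nat.card ↥sᶜ)! := by
      rw [Nat.card_prod]
      exact Nat.mul_le_mul (Nat.card_equiv_le_factorial _ _) (Nat.card_equiv_le_factorial _ _)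
    _ = s.ncard ! * (Nat.card α - s.ncard)! := by
      rw [Nat.card_coe_set_eq, Nat.card_coe_set_eq, Set.ncard_compl]

theorem SimpleGraph.card_equiv_map_eq_le {V W : Type*} [Finite V] (H : SimpleGraph V)
    (G : SimpleGraph W) :
    Nat.card {π : V ≃ W // H.map π.toEmbedding = G} ≤
      H.support.ncard ! * (Nat.card V - H.support.ncard)! := by
  have hsupport {π : V ≃ W} (h : H.map π.toEmbedding = G) : π '' H.support = G.support := by
    rw [← h, support_map]
    rfl
  calc Nat.card {π : V ≃ W // H.map π.toEmbedding = G}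
      ≤ Nat.card {π : V ≃ W // π '' H.support = G.support} :=
        Nat.card_le_card_of_injective (Subtype.map id fun _ => hsupport)
          (Subtype.map_injective _ Function.injective_id)
    _ ≤ _ := Nat.card_equiv_image_eq_le _ _

theorem prob_map_graph_le_min_general {V₁ V₂ : Type*} [Fintype V₁]
    (n : ℕ)
    (h₁ : Fintype.card V₁ = n)
    (H₁ : SimpleGraph V₁) (H₂ : SimpleGraph V₂) :
    (Nat.card {π : V₁ ≃ V₂ // H₁.map π.toEmbedding = H₂} : ℝ) / n.factorial ≤
      min (((H₁.support.ncard : ℝ) / n) ^ H₁.support.ncard)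
          (((H₂.support.ncard : ℝ) / n) ^ H₂.support.ncard) := by
  rcases isEmpty_or_nonempty {π : V₁ ≃ V₂ // H₁.map π.toEmbedding = H₂} with _ | ⟨⟨π₀, hπ₀⟩⟩
  · rw [Nat.card_of_isEmpty, Nat.cast_zero, zero_div]
    positivity
  set k := H₁.support.ncard
  have hk : H₂.support.ncard = k := by
    rw [← hπ₀, SimpleGraph.support_map, Set.ncard_image_of_injective _ π₀.toEmbedding.injective]
  have hn : Nat.card V₁ = n := Nat.card_eq_fintype_card.trans h₁
  have hkn : k ≤ n := hn ▸ Set.ncard_le_card _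
  rw [hk, min_self]
  calc (Nat.card {π : V₁ ≃ V₂ // H₁.map π.toEmbedding = H₂} : ℝ) / n !
      ≤ ((k ! * (n - k)! : ℕ) : ℝ) / n ! := by
        gcongr
        exact hn ▸ H₁.card_equiv_map_eq_le H₂
    _ ≤ ((k : ℝ) / n) ^ k := Nat.factorial_mul_factorial_div_factorial_le hkn

/-- Let `π` be a uniformly random bijection between two `n`-element sets and let
`H₁`, `H₂` be simple graphs on (subsets of) these sets, with vertex sets taken to be
their supports.  The probability that `π` maps `H₁` exactly onto `H₂` is at most
`min((v(H₁)/n)^{v(H₁)}, (v(H₂)/n)^{v(H₂)})`. -/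
theorem prob_map_graph_le_min {V₁ V₂ : Type*} [Fintype V₁] [Fintype V₂]
    (n : ℕ) (hn : 0 < n)
    (h₁ : Fintype.card V₁ = n) (h₂ : Fintype.card V₂ = n)
    (H₁ : SimpleGraph V₁) (H₂ : SimpleGraph V₂) :
    (Nat.card {π : V₁ ≃ V₂ // H₁.map π.toEmbedding = H₂} : ℝ) / n.factorial ≤
      min (((H₁.support.ncard : ℝ) / n) ^ H₁.support.ncard)
          (((H₂.support.ncard : ℝ) / n) ^ H₂.support.ncard) :=
  prob_map_graph_le_min_general n h₁ H₁ H₂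
end

section
/- Let H₁ and H₂ be connected simple graphs sharing at least one vertex, with H₁ ≠ H₂ (as edge sets), and let H₀ be a subgraph of the edge-intersection graph H₁ ∩ H₂. Then |V((H₁ △ H₂) ∪ H₀)| ≥ v(H₁) + v(H₂) − 2·|V(H₁) ∩ V(H₂)| + v(H₀) + 1{H₀ = ∅}, where H₁ △ H₂ is the graph of edges in exactly one of H₁, H₂ together with their incident vertices. -/
open scoped symmDiff Classical

private lemma mem_support'' {V : Type*} {G : SimpleGraph V} {v : V} :
    v ∈ G.support ↔ ∃ w, G.Adj v w := SimpleGraph.mem_support G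

private lemma walk_cross' {V : Type*} {G : SimpleGraph V} (P : V → Prop) :
    ∀ {u w : V}, G.Walk u w → ¬ P u → P w →
      ∃ a b, G.Adj a b ∧ ¬ P a ∧ P b := by
  intro u w p
  induction p with
  | nil => exact fun h1 h2 => absurd h2 h1
  | @cons u v w h p ih =>
    intro h1 h2
    by_cases hv : P v
    · exact ⟨u, v, h, h1, hv⟩
    · exact ih hv h2

private lemma cross_exists' {V : Type*} {G : SimpleGraph V} (B : Set V)
    (hc : (SimpleGraph.induce G.support G).Connected)
    {u w : V} (hu : u ∈ G.support) (hunB : u ∉ B)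
    (hw : w ∈ G.support) (hwB : w ∈ B) :
    ∃ a b, G.Adj a b ∧ a ∉ B ∧ b ∈ B := by
  obtain ⟨p⟩ := hc.1 ⟨u, hu⟩ ⟨w, hw⟩
  obtain ⟨a, b, hab, ha, hb⟩ := walk_cross' (fun z : G.support => (z : V) ∈ B) p hunB hwB
  exact ⟨a, b, hab, ha, hb⟩

/-- Let `H₁`, `H₂` be connected (edge-induced) simple graphs sharing at least one
vertex, with `H₁ ≠ H₂`, and let `H₀` be a subgraph of `H₁ ∩ H₂`.  Then
`|V((H₁ △ H₂) ∪ H₀)| ≥ v(H₁) + v(H₂) − 2|V(H₁)∩V(H₂)| + v(H₀) + 1{H₀ = ∅}`,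
where the vertex set of each edge-induced graph is its support. -/
theorem symmDiff_union_support_card {V : Type*} [Fintype V]
    (H₁ H₂ H₀ : SimpleGraph V)
    (hc1 : (SimpleGraph.induce H₁.support H₁).Connected)
    (hc2 : (SimpleGraph.induce H₂.support H₂).Connected)
    (hshare : (H₁.support ∩ H₂.support).Nonempty)
    (hne : H₁ ≠ H₂)
    (hH₀ : H₀ ≤ H₁ ⊓ H₂) :
    (H₁.support.ncard : ℤ) + H₂.support.ncard
        - 2 * (H₁.support ∩ H₂.support).ncard
        + H₀.support.ncard + (if H₀ = ⊥ then 1 else 0)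
      ≤ ((H₁ ∆ H₂ ⊔ H₀).support.ncard : ℤ) := by
  classical
  set A := H₁.support with hA
  set B := H₂.support with hB
  set D := (H₁ ∆ H₂ ⊔ H₀).support with hD
  have hΔadj : ∀ a b, (H₁ ∆ H₂).Adj a b ↔
      (H₁.Adj a b ∧ ¬ H₂.Adj a b) ∨ (H₂.Adj a b ∧ ¬ H₁.Adj a b) := by
    intro a b
    rw [symmDiff_def]
    simp [SimpleGraph.sup_adj, SimpleGraph.sdiff_adj]
  have hΔD : (H₁ ∆ H₂).support ⊆ D := SimpleGraph.support_mono le_sup_left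
  -- A \ B ⊆ D
  have hXD : A \ B ⊆ D := by
    rintro v ⟨hvA, hvB⟩
    obtain ⟨w, hw⟩ := mem_support''.mp hvA
    have h2 : ¬ H₂.Adj v w := fun h => hvB (mem_support''.mpr ⟨w, h⟩)
    exact hΔD (mem_support''.mpr ⟨w, (hΔadj v w).mpr (Or.inl ⟨hw, h2⟩)⟩)
  have hYD : B \ A ⊆ D := by
    rintro v ⟨hvB, hvA⟩
    obtain ⟨w, hw⟩ := mem_support''.mp hvB
    have h1 : ¬ H₁.Adj v w := fun h => hvA (mem_support''.mpr ⟨w, h⟩)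
    exact hΔD (mem_support''.mpr ⟨w, (hΔadj v w).mpr (Or.inr ⟨hw, h1⟩)⟩)
  -- choose the extra set T
  have hT : ∃ T : Set V, T ⊆ A ∩ B ∧ T ⊆ D ∧
      (T.ncard : ℤ) = H₀.support.ncard + (if H₀ = ⊥ then 1 else 0) := by
    by_cases h0 : H₀ = ⊥
    · -- need a vertex of the symmetric difference lying in A ∩ B
      have ht : ∃ t, t ∈ A ∩ B ∧ t ∈ (H₁ ∆ H₂).support := by
        by_cases hAB : (A \ B).Nonempty
        · obtain ⟨u, hu, hunB⟩ := hAB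
          obtain ⟨w, hwA, hwB⟩ := hshare
          obtain ⟨a, b, hab, ha, hb⟩ := cross_exists' B hc1 hu hunB hwA hwB
          have hbA : b ∈ A := mem_support''.mpr ⟨a, hab.symm⟩
          have h2 : ¬ H₂.Adj a b := fun h => ha (mem_support''.mpr ⟨b, h⟩)
          exact ⟨b, ⟨hbA, hb⟩, mem_support''.mpr
            ⟨a, ((hΔadj b a).mpr (Or.inl ⟨hab.symm, fun h => h2 h.symm⟩))⟩⟩
        · by_cases hBA : (B \ A).Nonempty
          · obtain ⟨u, hu, hunA⟩ := hBA
            obtain ⟨w, hwA, hwB⟩ := hshare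
            obtain ⟨a, b, hab, ha, hb⟩ := cross_exists' A hc2 hu hunA hwB hwA
            have hbB : b ∈ B := mem_support''.mpr ⟨a, hab.symm⟩
            have h1 : ¬ H₁.Adj a b := fun h => ha (mem_support''.mpr ⟨b, h⟩)
            exact ⟨b, ⟨hb, hbB⟩, mem_support''.mpr
              ⟨a, ((hΔadj b a).mpr (Or.inr ⟨hab.symm, fun h => h1 h.symm⟩))⟩⟩
          · have hABeq : A = B := by
              rw [Set.not_nonempty_iff_eq_empty, Set.diff_eq_empty] at hAB hBA
              exact le_antisymm hAB hBA
            have hbot : H₁ ∆ H₂ ≠ ⊥ := fun h => hne (symmDiff_eq_bot.mp h)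
            have : ∃ a b, (H₁ ∆ H₂).Adj a b := by
              by_contra h
              push_neg at h
              exact hbot (by ext a b; simp [h a b])
            obtain ⟨a, b, hab⟩ := this
            have haA : a ∈ A ∩ B := by
              rcases (hΔadj a b).mp hab with ⟨h1, -⟩ | ⟨h2, -⟩
              · have : a ∈ A := mem_support''.mpr ⟨b, h1⟩
                exact ⟨this, hABeq ▸ this⟩
              · have : a ∈ B := mem_support''.mpr ⟨b, h2⟩
                exact ⟨hABeq ▸ this, this⟩
            exact ⟨a, haA, mem_support''.mpr ⟨b, hab⟩⟩
      obtain ⟨t, htAB, htΔ⟩ := ht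
      refine ⟨{t}, by simpa using htAB, by simpa using hΔD htΔ, ?_⟩
      have hsb : (⊥ : SimpleGraph V).support = ∅ := by
        ext v; simp [mem_support'']
      simp [h0, hsb]
    · refine ⟨H₀.support, ?_, SimpleGraph.support_mono le_sup_right, by simp [h0]⟩
      intro v hv
      exact ⟨SimpleGraph.support_mono (le_trans hH₀ inf_le_left) hv,
        SimpleGraph.support_mono (le_trans hH₀ inf_le_right) hv⟩
  obtain ⟨T, hTAB, hTD, hTcard⟩ := hT
  -- disjointness
  have dXY : Disjoint (A \ B) (B \ A) := disjoint_sdiff_sdiff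
  have dXT : Disjoint (A \ B) T := Set.disjoint_left.mpr fun x hx hxT => hx.2 (hTAB hxT).2
  have dYT : Disjoint (B \ A) T := Set.disjoint_left.mpr fun x hx hxT => hx.2 (hTAB hxT).1
  have hUD : (A \ B) ∪ ((B \ A) ∪ T) ⊆ D :=
    Set.union_subset hXD (Set.union_subset hYD hTD)
  have hcount : (A \ B).ncard + (B \ A).ncard + T.ncard ≤ D.ncard := by
    have e1 : ((A \ B) ∪ ((B \ A) ∪ T)).ncard = (A \ B).ncard + ((B \ A) ∪ T).ncard :=
      Set.ncard_union_eq (Disjoint.union_right dXY dXT) (Set.toFinite _) (Set.toFinite _)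
    have e2 : ((B \ A) ∪ T).ncard = (B \ A).ncard + T.ncard :=
      Set.ncard_union_eq dYT (Set.toFinite _) (Set.toFinite _)
    have := Set.ncard_le_ncard hUD (Set.toFinite D)
    omega
  -- cardinality arithmetic
  have eA : A.ncard = (A \ B).ncard + (A ∩ B).ncard := by
    rw [← Set.ncard_diff_add_ncard_of_subset Set.inter_subset_left (Set.toFinite A),
      Set.diff_self_inter]
  have eB : B.ncard = (B \ A).ncard + (A ∩ B).ncard := by
    rw [← Set.ncard_diff_add_ncard_of_subset Set.inter_subset_left (Set.toFinite B),
      Set.diff_self_inter, Set.inter_comm]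
  rw [eA, eB]
  push_cast
  linarith [hTcard, (Int.ofNat_le.mpr hcount : ((A \ B).ncard + (B \ A).ncard + T.ncard : ℤ) ≤ D.ncard)]
end

section
/- For all natural numbers n, v with 2v ≤ n, the ratio n!·(n−2v)! / ((n−v)!)² is at most exp(v²/(n−2v+1)). -/
/-- For all natural numbers `n`, `v` with `2v ≤ n`, the ratio
`n!·(n−2v)! / ((n−v)!)²` is at most `exp(v²/(n−2v+1))`. -/
theorem factorial_ratio_le_exp (n v : ℕ) (h : 2 * v ≤ n) :
    (n.factorial * (n - 2 * v).factorial : ℝ) / ((n - v).factorial : ℝ) ^ 2 ≤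
      Real.exp ((v : ℝ) ^ 2 / ((n : ℝ) - 2 * v + 1)) := by
  have hvn : v ≤ n := by omega
  have hvnv : v ≤ n - v := by omega
  have h1 : (n - v).factorial * n.descFactorial v = n.factorial :=
    Nat.factorial_mul_descFactorial hvn
  have h2 : (n - 2 * v).factorial * (n - v).descFactorial v = (n - v).factorial := by
    have := Nat.factorial_mul_descFactorial hvnv
    rwa [show n - v - v = n - 2 * v by omega] at this
  -- denominators positive
  have hd0 : (0:ℝ) < ((n - v).descFactorial v : ℝ) := by
    have : (n - v).descFactorial v ≠ 0 := by
      rw [Ne, Nat.descFactorial_eq_zero_iff_lt]; omega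
    exact_mod_cast Nat.pos_of_ne_zero this
  have hfpos : (0:ℝ) < ((n - v).factorial : ℝ) := by exact_mod_cast (n - v).factorial_pos
  have hratio : (n.factorial * (n - 2 * v).factorial : ℝ) / ((n - v).factorial : ℝ) ^ 2
      = (n.descFactorial v : ℝ) / ((n - v).descFactorial v : ℝ) := by
    rw [← h1, ← h2]
    push_cast
    field_simp
  rw [hratio, Nat.descFactorial_eq_prod_range, Nat.descFactorial_eq_prod_range]
  push_cast
  rw [← Finset.prod_div_distrib]
  have hden : ∀ i ∈ Finset.range v, (0:ℝ) < ((n - v - i : ℕ) : ℝ) := by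
    intro i hi
    have hi' := Finset.mem_range.mp hi
    have : 1 ≤ n - v - i := by omega
    exact_mod_cast Nat.lt_of_lt_of_le Nat.zero_lt_one this |> Nat.cast_pos.mpr
  calc (∏ i ∈ Finset.range v, ((n - i : ℕ) : ℝ) / ((n - v - i : ℕ) : ℝ))
      ≤ ∏ i ∈ Finset.range v, Real.exp ((v : ℝ) / ((n : ℝ) - 2 * v + 1)) := by
        apply Finset.prod_le_prod
        · intro i hi
          exact div_nonneg (by positivity) (hden i hi).le
        · intro i hi
          have hi' := Finset.mem_range.mp hi
          have hb : (0:ℝ) < (n : ℝ) - 2 * v + 1 := by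
            have : (2 * v : ℝ) ≤ n := by exact_mod_cast h
            linarith
          have hle : ((n : ℝ) - 2 * v + 1) ≤ ((n - v - i : ℕ) : ℝ) := by
            have : n - 2 * v + 1 ≤ n - v - i := by omega
            calc ((n : ℝ) - 2 * v + 1) ≤ ((n - 2 * v + 1 : ℕ) : ℝ) := by
                  push_cast [Nat.cast_sub (by omega : 2 * v ≤ n)]
                  linarith
              _ ≤ _ := by exact_mod_cast this
          have key : ((n - i : ℕ) : ℝ) / ((n - v - i : ℕ) : ℝ)
              ≤ 1 + (v : ℝ) / ((n : ℝ) - 2 * v + 1) := by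
            rw [div_le_iff₀ (hden i hi)]
            have hcast : ((n - i : ℕ) : ℝ) = ((n - v - i : ℕ) : ℝ) + v := by
              have : (n - i : ℕ) = (n - v - i) + v := by omega
              exact_mod_cast this
            rw [hcast]
            have hdiv : (v : ℝ) / ((n : ℝ) - 2 * v + 1) * ((n - v - i : ℕ) : ℝ) ≥ (v : ℝ) := by
              have h' := mul_le_mul_of_nonneg_left hle
                (div_nonneg (Nat.cast_nonneg v) hb.le)
              rwa [div_mul_cancel₀ _ (ne_of_gt hb)] at h'
            nlinarith [hden i hi, hdiv]
          calc ((n - i : ℕ) : ℝ) / ((n - v - i : ℕ) : ℝ)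
              ≤ 1 + (v : ℝ) / ((n : ℝ) - 2 * v + 1) := key
            _ ≤ Real.exp ((v : ℝ) / ((n : ℝ) - 2 * v + 1)) := by
                rw [add_comm]; exact Real.add_one_le_exp _
    _ = Real.exp ((v : ℝ) ^ 2 / ((n : ℝ) - 2 * v + 1)) := by
        rw [Finset.prod_const, ← Real.exp_nat_mul]
        congr 1
        rw [Finset.card_range]
        ring
end
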